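/- arXiv:1608.06135 — 11 statements merged into one kernel-verified Lean document; each statement's English description precedes it below -/
import Mathlib

section
/- Let $a \geq 1$ and $c \geq 1$ be integers. Then $2^{-2c} \sum_{k=0}^{2^{a+c}-1} (k+1)\,(2^{a+c} - k) > \sum_{k=0}^{2^{a}-1} (k+1)\,(2^{a} - k)$. (Equivalently, $2^{a-c}(2^{a+c}+1)(2^{a+c}+2) > 2^{a}(2^{a}+1)(2^{a}+2)$.) Hence, in a Ranked Stochastic Block Model with $R = 2^a$ equal classes of size $n$ and backward-link probability $s > 0$, splitting each class into $2^{c}$ equal subclasses strictly increases the expected agony with linear penalty ($d=1$): $s\,(n 2^{-c})^2 \sum_{k=0}^{2^{a+c}-1}(k+1)(2^{a+c}-k) > s\, n^2 \sum_{k=0}^{2^{a}-1}(k+1)(2^{a}-k)$. -/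
lemma sumT (N : ℕ) : ∑ k ∈ Finset.range N, ((k : ℝ) + 1) = N * (N + 1) / 2 := by
  induction N with
  | zero => simp
  | succ n ih =>
    rw [Finset.sum_range_succ, ih]
    push_cast
    ring

lemma sumS (N : ℕ) :
    ∑ k ∈ Finset.range N, ((k : ℝ) + 1) * ((N : ℝ) - k) = N * (N + 1) * (N + 2) / 6 := by
  induction N with
  | zero => simp
  | succ n ih =>
    have h : ∀ k : ℕ, ((k : ℝ) + 1) * (((n : ℝ) + 1) - k)
        = ((k : ℝ) + 1) * ((n : ℝ) - k) + ((k : ℝ) + 1) := by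
      intro k; ring
    have : ∑ k ∈ Finset.range (n + 1), ((k : ℝ) + 1) * (((n + 1 : ℕ) : ℝ) - k)
        = (∑ k ∈ Finset.range (n + 1), ((k : ℝ) + 1) * ((n : ℝ) - k))
          + ∑ k ∈ Finset.range (n + 1), ((k : ℝ) + 1) := by
      rw [← Finset.sum_add_distrib]
      apply Finset.sum_congr rfl
      intro k _
      push_cast
      ring
    rw [this, Finset.sum_range_succ, ih, sumT]
    push_cast
    ring

/-- For integers `a ≥ 1`, `c ≥ 1`,
`2^(-2c) * ∑_{k<2^(a+c)} (k+1)(2^(a+c)-k) > ∑_{k<2^a} (k+1)(2^a-k)`;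
hence splitting each of the `2^a` classes of an RSBM into `2^c` equal subclasses
strictly increases the expected agony with linear penalty. -/
theorem stmt_2 (a c : ℕ) (ha : 1 ≤ a) (hc : 1 ≤ c) :
    ((2 : ℝ) ^ (-(2 * (c : ℤ))) *
        ∑ k ∈ Finset.range (2 ^ (a + c)), ((k : ℝ) + 1) * ((2 : ℝ) ^ (a + c) - (k : ℝ)) >
      ∑ k ∈ Finset.range (2 ^ a), ((k : ℝ) + 1) * ((2 : ℝ) ^ a - (k : ℝ)))
    ∧
    ∀ n s : ℝ, 0 < n → 0 < s →
      s * (n * (2 : ℝ) ^ (-(c : ℤ))) ^ 2 *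
          ∑ k ∈ Finset.range (2 ^ (a + c)), ((k : ℝ) + 1) * ((2 : ℝ) ^ (a + c) - (k : ℝ)) >
        s * n ^ 2 *
          ∑ k ∈ Finset.range (2 ^ a), ((k : ℝ) + 1) * ((2 : ℝ) ^ a - (k : ℝ)) := by
  have hcastbig : (2 : ℝ) ^ (a + c) = ((2 ^ (a + c) : ℕ) : ℝ) := by push_cast; ring
  have hcasta : (2 : ℝ) ^ a = ((2 ^ a : ℕ) : ℝ) := by push_cast; ring
  have hbig : ∑ k ∈ Finset.range (2 ^ (a + c)), ((k : ℝ) + 1) * ((2 : ℝ) ^ (a + c) - (k : ℝ))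
      = (2:ℝ) ^ (a+c) * ((2:ℝ) ^ (a+c) + 1) * ((2:ℝ) ^ (a+c) + 2) / 6 := by
    rw [hcastbig]; exact sumS _
  have hsmall : ∑ k ∈ Finset.range (2 ^ a), ((k : ℝ) + 1) * ((2 : ℝ) ^ a - (k : ℝ))
      = (2:ℝ) ^ a * ((2:ℝ) ^ a + 1) * ((2:ℝ) ^ a + 2) / 6 := by
    rw [hcasta]; exact sumS _
  set x : ℝ := (2:ℝ) ^ a with hx
  set t : ℝ := (2:ℝ) ^ c with ht
  have hxt : (2:ℝ) ^ (a + c) = x * t := by rw [hx, ht, pow_add]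
  have hx2 : (2:ℝ) ≤ x := by
    calc (2:ℝ) = 2 ^ 1 := (pow_one 2).symm
    _ ≤ 2 ^ a := by apply pow_le_pow_right₀ (by norm_num) ha
  have ht2 : (2:ℝ) ≤ t := by
    calc (2:ℝ) = 2 ^ 1 := (pow_one 2).symm
    _ ≤ 2 ^ c := by apply pow_le_pow_right₀ (by norm_num) hc
  have htpos : (0:ℝ) < t := by linarith
  have hz1 : (2:ℝ) ^ (-(2 * (c : ℤ))) = 1 / t ^ 2 := by
    rw [ht, one_div, ← pow_mul, ← zpow_natCast (2:ℝ) (c * 2), ← zpow_neg]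
    congr 1; push_cast; ring
  have hz2 : (2:ℝ) ^ (-(c : ℤ)) = 1 / t := by
    rw [ht, zpow_neg, zpow_natCast, one_div]
  have key : (1 / t ^ 2) * (x * t * (x * t + 1) * (x * t + 2) / 6)
      > x * (x + 1) * (x + 2) / 6 := by
    have h2x : 2 * x < x ^ 3 * t := by
      have hx4 : (4:ℝ) ≤ x ^ 2 := by nlinarith
      have hmm : x * (4 * 2) ≤ x * (x ^ 2 * t) := by
        apply mul_le_mul_of_nonneg_left _ (by linarith)
        exact mul_le_mul hx4 ht2 (by norm_num) (by nlinarith)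
      nlinarith
    have hd : 0 < t * (t - 1) * (x ^ 3 * t - 2 * x) := by
      apply mul_pos (mul_pos htpos (by linarith)) (by linarith)
    rw [gt_iff_lt, one_div, inv_mul_eq_div, div_div, lt_div_iff₀ (by positivity)]
    nlinarith [hd]
  have part1 : (2 : ℝ) ^ (-(2 * (c : ℤ))) *
        (∑ k ∈ Finset.range (2 ^ (a + c)), ((k : ℝ) + 1) * ((2 : ℝ) ^ (a + c) - (k : ℝ))) >
      ∑ k ∈ Finset.range (2 ^ a), ((k : ℝ) + 1) * ((2 : ℝ) ^ a - (k : ℝ)) := by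
    rw [hbig, hsmall, hz1, hxt]
    exact key
  refine ⟨part1, ?_⟩
  intro n s hn hs
  have hb := hbig
  have hsns : 0 < s * n ^ 2 := by positivity
  calc s * (n * (2 : ℝ) ^ (-(c : ℤ))) ^ 2 *
          ∑ k ∈ Finset.range (2 ^ (a + c)), ((k : ℝ) + 1) * ((2 : ℝ) ^ (a + c) - (k : ℝ))
      = s * n ^ 2 * ((2 : ℝ) ^ (-(2 * (c : ℤ))) *
          ∑ k ∈ Finset.range (2 ^ (a + c)), ((k : ℝ) + 1) * ((2 : ℝ) ^ (a + c) - (k : ℝ))) := by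
        rw [hz1, hz2]; ring
    _ > s * n ^ 2 * ∑ k ∈ Finset.range (2 ^ a), ((k : ℝ) + 1) * ((2 : ℝ) ^ a - (k : ℝ)) := by
        exact (mul_lt_mul_iff_right₀ hsns).mpr part1
end

section
/- Let $a \geq 2$ be an integer and let $p, q, s$ be reals with $p \geq q > s > 0$. Define $D = 2^a(2p - 3q + s) + 4^a(q+s) - 2p + 2q$ and, for an integer $b$ with $0 \leq b \leq a$, the inverted-ranking hierarchy estimate $\bar h_1^{(i)}(b) = \frac{2^{-b}(2^b - 2^a)\left(2^{a+b}(q - 3s) + (4^a - 6)q + 6p\right)}{3D}$. Then $\bar h_1^{(i)}(b) \leq 0$ for every integer $b \in \{0, 1, \dots, a\}$; i.e., in the twitter-like regime no inverted ranking has positive hierarchy. -/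
/-! Put `x = 2^a` and `y = 2^b`. The denominator equals
`3 (2(p - q)(x - 1) + q x (x - 1) + s x (x + 1)) ≥ 0` and the prefactor `(y - x) / y` is `≤ 0`.
The prefactor vanishes for `b = a`; for `b < a` we have `x ≥ 2y`, and the remaining factor equals
`3xy(q - s) + q x (x - 2y) + 6(p - q) ≥ 0`. -/

namespace RankedSBM

lemma denominator_nonneg {x p q s : ℝ} (hx : 1 ≤ x) (hpq : q ≤ p) (hq : 0 ≤ q)
    (hs : 0 ≤ s) :
    0 ≤ 3 * (x * (2 * p - 3 * q + s) + x ^ 2 * (q + s) - 2 * p + 2 * q) := by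
  have hx₀ : 0 ≤ x - 1 := by linarith
  have h : x * (2 * p - 3 * q + s) + x ^ 2 * (q + s) - 2 * p + 2 * q =
      2 * (p - q) * (x - 1) + q * x * (x - 1) + s * x * (x + 1) := by ring
  rw [h]
  have := sub_nonneg.2 hpq
  positivity

lemma numerator_nonneg {x y p q s : ℝ} (hy : 0 ≤ y) (hxy : 2 * y ≤ x) (hpq : q ≤ p)
    (hsq : s ≤ q) (hq : 0 ≤ q) :
    0 ≤ x * y * (q - 3 * s) + (x ^ 2 - 6) * q + 6 * p := by
  have h : x * y * (q - 3 * s) + (x ^ 2 - 6) * q + 6 * p =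
      3 * x * y * (q - s) + q * x * (x - 2 * y) + 6 * (p - q) := by ring
  rw [h]
  have := sub_nonneg.2 hpq
  have := sub_nonneg.2 hsq
  have := sub_nonneg.2 hxy
  have : 0 ≤ x := by linarith
  positivity

lemma inverted_estimate_nonpos {x y p q s : ℝ} (hy : 0 < y) (hyx : y = x ∨ 2 * y ≤ x)
    (hx : 1 ≤ x) (hpq : q ≤ p) (hsq : s ≤ q) (hq : 0 ≤ q) (hs : 0 ≤ s) :
    y⁻¹ * (y - x) * (x * y * (q - 3 * s) + (x ^ 2 - 6) * q + 6 * p) /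
      (3 * (x * (2 * p - 3 * q + s) + x ^ 2 * (q + s) - 2 * p + 2 * q)) ≤ 0 := by
  refine div_nonpos_of_nonpos_of_nonneg ?_ (denominator_nonneg hx hpq hq hs)
  rcases hyx with rfl | hxy
  · simp
  · have hprefactor : y⁻¹ * (y - x) ≤ 0 :=
      mul_nonpos_of_nonneg_of_nonpos (inv_nonneg.2 hy.le) (by linarith)
    exact mul_nonpos_of_nonpos_of_nonneg hprefactor (numerator_nonneg hy.le hxy hpq hsq hq)

lemma two_pow_eq_or_two_mul_le {a b : ℕ} (hb : b ≤ a) :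
    (2 : ℝ) ^ b = 2 ^ a ∨ 2 * (2 : ℝ) ^ b ≤ 2 ^ a := by
  rcases hb.eq_or_lt with rfl | hlt
  · exact Or.inl rfl
  · right
    rw [← pow_succ']
    exact pow_le_pow_right₀ one_le_two hlt

end RankedSBM

theorem stmt_3_general (a : ℕ) (p q s : ℝ) (hpq : q ≤ p) (hqs : s < q) (hs : 0 < s) :
    ∀ b : ℕ, b ≤ a →
      ((2 : ℝ) ^ b)⁻¹ * ((2 : ℝ) ^ b - (2 : ℝ) ^ a) *
          ((2 : ℝ) ^ (a + b) * (q - 3 * s) + ((4 : ℝ) ^ a - 6) * q + 6 * p) /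
        (3 * ((2 : ℝ) ^ a * (2 * p - 3 * q + s) + (4 : ℝ) ^ a * (q + s) - 2 * p + 2 * q))
        ≤ 0 := by
  intro b hb
  have h_four_pow : (4 : ℝ) ^ a = ((2 : ℝ) ^ a) ^ 2 := by
    rw [← pow_mul, mul_comm, pow_mul]
    norm_num
  rw [h_four_pow, pow_add]
  exact RankedSBM.inverted_estimate_nonpos (by positivity)
    (RankedSBM.two_pow_eq_or_two_mul_le hb) (one_le_pow₀ one_le_two)
    hpq hqs.le (hs.trans hqs).le hs.le

/-- In the twitter-like regime `p ≥ q > s > 0` of the RSBM with `2^a` equal classes,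
the first-order hierarchy estimate of every inverted merged ranking is nonpositive. -/
theorem stmt_3 (a : ℕ) (ha : 2 ≤ a) (p q s : ℝ) (hpq : q ≤ p) (hqs : s < q) (hs : 0 < s) :
    ∀ b : ℕ, b ≤ a →
      ((2 : ℝ) ^ b)⁻¹ * ((2 : ℝ) ^ b - (2 : ℝ) ^ a) *
          ((2 : ℝ) ^ (a + b) * (q - 3 * s) + ((4 : ℝ) ^ a - 6) * q + 6 * p) /
        (3 * ((2 : ℝ) ^ a * (2 * p - 3 * q + s) + (4 : ℝ) ^ a * (q + s) - 2 * p + 2 * q))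
        ≤ 0 :=
  stmt_3_general a p q s hpq hqs hs
end

section
/- Let $a \geq 2$ be an integer, $p \geq q > s > 0$ reals with $s \leq s_m := \frac{6(2^a-1)p - 3(2^a-2)q}{2^a - 4^a + 8^a}$. Define $D = 2^a(2p-3q+s) + 4^a(q+s) - 2p + 2q$ and, for a real number $\tilde R \in [1, 2^a]$, the merged direct-ranking hierarchy estimate $H(\tilde R) = \bar h_1(a - \log_2 \tilde R)$, where $\bar h_1(b) = \frac{2^{-b}(2^a - 2^b)\left(6p + 3(2^{a+b} - 2)q - 2^a(2^a + 2^b)s\right)}{3D}$. Then for every integer $\tilde R$ with $1 \leq \tilde R \leq 2^a$ one has $H(\tilde R) \leq H(2^a)$; i.e., below the resolution threshold $s_m$ the planted ranking ($\tilde R = 2^a$ classes, $b = 0$) is optimal among all uniform merged rankings. -/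
/-- First-order hierarchy estimate of the direct ranking of an RSBM with `2^a` equal
classes merged into `2^(a-b)` equal classes (real merging parameter `b`, linear penalty). -/
noncomputable def hbar1 (p q s : ℝ) (a : ℕ) (b : ℝ) : ℝ :=
  (2 : ℝ) ^ (-b) * ((2 : ℝ) ^ (a : ℝ) - (2 : ℝ) ^ b) *
      (6 * p + 3 * ((2 : ℝ) ^ ((a : ℝ) + b) - 2) * q -
        (2 : ℝ) ^ (a : ℝ) * ((2 : ℝ) ^ (a : ℝ) + (2 : ℝ) ^ b) * s) /
    (3 * ((2 : ℝ) ^ (a : ℝ) * (2 * p - 3 * q + s) + (4 : ℝ) ^ (a : ℝ) * (q + s)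
      - 2 * p + 2 * q))

/-- Hierarchy estimate as a function of the number `R̃` of classes after merging. -/
noncomputable def Hmerge (p q s : ℝ) (a : ℕ) (Rt : ℝ) : ℝ :=
  hbar1 p q s a ((a : ℝ) - Real.logb 2 Rt)

lemma alg_key (p q s A r : ℝ) (hA0 : 0 < A) (hr0 : 0 < r)
    (hD3 : 0 < 3 * (A * (2 * p - 3 * q + s) + A * A * (q + s) - 2 * p + 2 * q))
    (hkey : 0 ≤ (A - r) * ((6 * p - 6 * q - A * A * s) * r + A * (3 * q - s))) :
    r / A * (A - A / r) * (6 * p + 3 * (A * A / r - 2) * q - A * (A + A / r) * s) /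
        (3 * (A * (2 * p - 3 * q + s) + A * A * (q + s) - 2 * p + 2 * q)) ≤
      1 * (A - 1) * (6 * p + 3 * (A - 2) * q - A * (A + 1) * s) /
        (3 * (A * (2 * p - 3 * q + s) + A * A * (q + s) - 2 * p + 2 * q)) := by
  rw [div_le_div_iff_of_pos_right hD3, ← sub_nonneg]
  have hid : 1 * (A - 1) * (6 * p + 3 * (A - 2) * q - A * (A + 1) * s) -
      r / A * (A - A / r) * (6 * p + 3 * (A * A / r - 2) * q - A * (A + A / r) * s) =
      (A - r) * ((6 * p - 6 * q - A * A * s) * r + A * (3 * q - s)) / r := by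
    field_simp
    ring
  rw [hid]
  exact div_nonneg hkey hr0.le

/-- Below the resolution threshold `s_m`, the planted ranking (with `2^a` classes)
is optimal among all uniform merged rankings in the twitter-like regime. -/
theorem stmt_4 (a : ℕ) (ha : 2 ≤ a) (p q s : ℝ) (hpq : q ≤ p) (hqs : s < q) (hs : 0 < s)
    (hsm : s ≤ (6 * ((2 : ℝ) ^ a - 1) * p - 3 * ((2 : ℝ) ^ a - 2) * q) /
      ((2 : ℝ) ^ a - (4 : ℝ) ^ a + (8 : ℝ) ^ a)) :
    ∀ Rt : ℕ, 1 ≤ Rt → Rt ≤ 2 ^ a →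
      Hmerge p q s a (Rt : ℝ) ≤ Hmerge p q s a ((2 ^ a : ℕ) : ℝ) := by
  intro Rt hRt1 hRt2
  have hr1 : (1 : ℝ) ≤ (Rt : ℝ) := by exact_mod_cast hRt1
  have hr0 : (0 : ℝ) < (Rt : ℝ) := by linarith
  set r : ℝ := (Rt : ℝ) with hrdef
  set A : ℝ := (2 : ℝ) ^ (a : ℝ) with hAdef
  have hAnat : A = (2 : ℝ) ^ a := by rw [hAdef, Real.rpow_natCast]
  have hA0 : 0 < A := Real.rpow_pos_of_pos two_pos _
  have hA4 : (4 : ℝ) ≤ A := by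
    rw [hAnat]
    calc (4 : ℝ) = 2 ^ 2 := by norm_num
    _ ≤ 2 ^ a := pow_le_pow_right₀ one_le_two ha
  have h4nat : (4 : ℝ) ^ a = A * A := by
    rw [hAnat, show (4 : ℝ) = 2 * 2 by norm_num, mul_pow]
  have h8nat : (8 : ℝ) ^ a = A * A * A := by
    rw [hAnat, show (8 : ℝ) = 2 * 2 * 2 by norm_num, mul_pow, mul_pow]
  have h4A : (4 : ℝ) ^ (a : ℝ) = A * A := by
    rw [Real.rpow_natCast]; exact h4nat
  -- threshold hypothesis rewritten
  have hden : 0 < A - A * A + A * A * A := by nlinarith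
  rw [hAnat.symm, h4nat, h8nat, le_div_iff₀ hden] at hsm
  have hC : 0 ≤ (A - 1) * (6 * p - 6 * q - A * A * s) + A * (3 * q - s) := by nlinarith
  have hE : 0 < A * (3 * q - s) := by
    apply mul_pos hA0; linarith
  -- key nonnegativity
  have hkey : 0 ≤ (A - r) * ((6 * p - 6 * q - A * A * s) * r + A * (3 * q - s)) := by
    rcases eq_or_lt_of_le hRt2 with heq | hlt
    · have : r = A := by rw [hrdef, heq, hAnat]; push_cast; ring
      rw [this, sub_self, zero_mul]
    · have hle : Rt + 1 ≤ 2 ^ a := hlt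
      have hrA1 : r ≤ A - 1 := by
        have : (Rt : ℝ) + 1 ≤ (2 : ℝ) ^ a := by exact_mod_cast hle
        rw [hAnat]; linarith
      have h2 : 0 ≤ (6 * p - 6 * q - A * A * s) * r + A * (3 * q - s) := by
        nlinarith [mul_nonneg (by linarith : (0:ℝ) ≤ r) hC,
          mul_nonneg hE.le (by linarith : (0:ℝ) ≤ A - 1 - r)]
      exact mul_nonneg (by linarith) h2
  have hD3 : 0 < 3 * (A * (2 * p - 3 * q + s) + A * A * (q + s) - 2 * p + 2 * q) := by
    nlinarith
  -- rewrite the goal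
  have hrl : (2 : ℝ) ^ (Real.logb 2 r) = r := Real.rpow_logb two_pos (by norm_num) hr0
  have e1 : (2 : ℝ) ^ ((a : ℝ) - Real.logb 2 r) = A / r := by
    rw [Real.rpow_sub two_pos, hrl, hAdef]
  have e2 : (2 : ℝ) ^ (-((a : ℝ) - Real.logb 2 r)) = r / A := by
    rw [Real.rpow_neg two_pos.le, e1, inv_div]
  have e3 : (2 : ℝ) ^ ((a : ℝ) + ((a : ℝ) - Real.logb 2 r)) = A * A / r := by
    rw [Real.rpow_add two_pos, e1, hAdef.symm, mul_div_assoc]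
  have hcast : ((2 ^ a : ℕ) : ℝ) = A := by rw [hAnat]; push_cast; ring
  have hlogA : (a : ℝ) - Real.logb 2 ((2 ^ a : ℕ) : ℝ) = 0 := by
    rw [hcast, hAdef, Real.logb_rpow two_pos (by norm_num), sub_self]
  simp only [Hmerge, hbar1, hlogA, neg_zero, Real.rpow_zero, add_zero, e1, e2, e3,
    hAdef.symm, h4A]
  have := alg_key p q s A r hA0 hr0 hD3 hkey
  calc r / A * (A - A / r) * (6 * p + 3 * (A * A / r - 2) * q - A * (A + A / r) * s) /
        (3 * (A * (2 * p - 3 * q + s) + A * A * (q + s) - 2 * p + 2 * q))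
      ≤ 1 * (A - 1) * (6 * p + 3 * (A - 2) * q - A * (A + 1) * s) /
        (3 * (A * (2 * p - 3 * q + s) + A * A * (q + s) - 2 * p + 2 * q)) := this
    _ = 1 * (A - 1) * (6 * p + 3 * (A - 2) * q - A * (A + 1) * s) /
        (3 * (A * (2 * p - 3 * q + s) + A * A * (q + s) - 2 * p + 2 * q)) := by ring
end

section
/- Let $a \geq 2$ be an integer and $p \geq q > s > 0$ reals with $s_m < s < s_2$, where $s_m = \frac{6(2^a-1)p - 3(2^a-2)q}{2^a - 4^a + 8^a}$ and $s_2 = \frac{3}{7} \cdot \frac{(4^a - 12)q + 12p}{4^a}$. Define $D = 2^a(2p-3q+s) + 4^a(q+s) - 2p + 2q$ and $\bar h_1(b) = \frac{2^{-b}(2^a - 2^b)\left(6p + 3(2^{a+b} - 2)q - 2^a(2^a + 2^b)s\right)}{3D}$ for real $b$. Then $b^* := \frac{1}{2}\log_2 \frac{2^{2a} s + 6(q - p)}{3q - s}$ is well defined (both $2^{2a}s + 6(q-p) > 0$ and $3q - s > 0$), satisfies $0 < b^* < a$, and $\bar h_1(b) \leq \bar h_1(b^*)$ for all real $b \in [0,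 a]$. -/
/-- The optimal merging parameter `b* = (1/2) log₂((2^(2a) s + 6(q-p))/(3q - s))`. -/
noncomputable def bstar (p q s : ℝ) (a : ℕ) : ℝ :=
  (1 / 2) * Real.logb 2 (((2 : ℝ) ^ (2 * a) * s + 6 * (q - p)) / (3 * q - s))

/-!
Write `A = 2^a` and `x = 2^b`. The numerator of `hbar1` is
`x⁻¹ (A - x) (6p + 3(Ax - 2)q - A(A + x)s) = A²β + γ - A (γ / x + β x)`
with `β = 3q - s` and `γ = A²s + 6(q - p)`, while its denominator does not depend on `b`.
By AM-GM, `γ / x + β x` is minimal at `x² = γ / β`, that is at `b = b*`. The bounds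
`s_m < s` and `s < q` give `β < γ < A²β`, which is `0 < b* < a`.
-/

open Real

noncomputable def hbarNum (p q s A x : ℝ) : ℝ :=
  x⁻¹ * (A - x) * (6 * p + 3 * (A * x - 2) * q - A * (A + x) * s)

lemma hbar1_eq_hbarNum (p q s : ℝ) (a : ℕ) (b : ℝ) :
    hbar1 p q s a b = hbarNum p q s (2 ^ a) (2 ^ b) /
      (3 * (2 ^ a * (2 * p - 3 * q + s) + (2 ^ a) ^ 2 * (q + s) - 2 * p + 2 * q)) := by
  have h4 : (4 : ℝ) ^ (a : ℝ) = ((2 : ℝ) ^ a) ^ 2 := by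
    rw [rpow_natCast, ← pow_mul, mul_comm, pow_mul]
    norm_num
  rw [hbar1, hbarNum, h4, rpow_add two_pos, rpow_neg zero_le_two, rpow_natCast]

lemma hbarNum_le_of_sq_mul_eq {p q s A x y : ℝ} (hA : 0 ≤ A) (hβ : 0 ≤ 3 * q - s)
    (hx : 0 < x) (hy : y ≠ 0) (hyγ : y ^ 2 * (3 * q - s) = A ^ 2 * s + 6 * (q - p)) :
    hbarNum p q s A x ≤ hbarNum p q s A y := by
  have hdiff : hbarNum p q s A y - hbarNum p q s A x = A * (3 * q - s) * (x - y) ^ 2 / x := by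
    unfold hbarNum
    field_simp
    linear_combination A * (x - y) * hyγ
  have : 0 ≤ A * (3 * q - s) * (x - y) ^ 2 / x := by positivity
  linarith

lemma rpow_half_logb_sq {b r : ℝ} (hb : 0 < b) (hb1 : b ≠ 1) (hr : 0 < r) :
    (b ^ (1 / 2 * logb b r)) ^ 2 = r := by
  rw [← rpow_natCast, ← rpow_mul hb.le, Nat.cast_ofNat,
    show 1 / 2 * logb b r * 2 = logb b r by ring, rpow_logb hb hb1 hr]

section Regime

variable {p q s A : ℝ}

lemma rsbm_denom_pos (hA : 2 ≤ A) (hq : 0 ≤ q) (hpq : q ≤ p) (hs : 0 < s) :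
    0 < A * (2 * p - 3 * q + s) + A ^ 2 * (q + s) - 2 * p + 2 * q := by
  have hD : A * (2 * p - 3 * q + s) + A ^ 2 * (q + s) - 2 * p + 2 * q
      = 2 * p * (A - 1) + q * (A - 1) * (A - 2) + s * A * (A + 1) := by ring
  rw [hD]
  have : 0 ≤ q * (A - 1) * (A - 2) := by
    apply mul_nonneg (mul_nonneg hq _) <;> linarith
  have : 0 < s * A * (A + 1) := by
    apply mul_pos (mul_pos hs _) <;> linarith
  nlinarith

lemma rsbm_one_lt_ratio (hA : 2 ≤ A) (hs : 0 < s) (hqs : s < q)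
    (hsm : (6 * (A - 1) * p - 3 * (A - 2) * q) / (A - A ^ 2 + A ^ 3) < s) :
    1 < (A ^ 2 * s + 6 * (q - p)) / (3 * q - s) := by
  have hden : 0 < A - A ^ 2 + A ^ 3 := by nlinarith
  rw [div_lt_iff₀ hden] at hsm
  have hp : 2 * p < (A ^ 2 + 2) * q := by
    have hsq : s * (A - A ^ 2 + A ^ 3) < q * (A - A ^ 2 + A ^ 3) :=
      mul_lt_mul_of_pos_right hqs hden
    have : (A - 1) * (2 * p) < (A - 1) * ((A ^ 2 + 2) * q) := by
      nlinarith [mul_pos (by linarith : (0 : ℝ) < q) (by linarith : (0 : ℝ) < A ^ 3 - A ^ 2 + A)]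
    exact lt_of_mul_lt_mul_left this (by linarith)
  -- `γ - β` is a positive combination of the slack in `s_m < s` and of `(A² + 2)q - 2p`
  have hsplit : (A ^ 2 * s + 6 * (q - p) - (3 * q - s)) * (A - A ^ 2 + A ^ 3)
      = (s * (A - A ^ 2 + A ^ 3) - (6 * (A - 1) * p - 3 * (A - 2) * q)) * (A ^ 2 + 1)
        + 3 * ((A ^ 2 + 2) * q - 2 * p) := by ring
  have : 0 < (A ^ 2 * s + 6 * (q - p) - (3 * q - s)) * (A - A ^ 2 + A ^ 3) := by
    rw [hsplit]
    have := mul_pos (sub_pos.mpr hsm) (by positivity : (0 : ℝ) < A ^ 2 + 1)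
    linarith
  rw [one_lt_div (by linarith)]
  linarith [pos_of_mul_pos_left this hden.le]

lemma rsbm_ratio_lt_sq (hA : 0 < A) (hpq : q ≤ p) (hs : 0 < s) (hqs : s < q) :
    (A ^ 2 * s + 6 * (q - p)) / (3 * q - s) < A ^ 2 := by
  rw [div_lt_iff₀ (by linarith)]
  nlinarith [mul_pos (sq_pos_of_pos hA) (by linarith : (0 : ℝ) < 3 * q - 2 * s)]

end Regime

lemma half_logb_two_mem_Ioo {r : ℝ} {a : ℕ} (h1 : 1 < r) (h2 : r < 2 ^ (2 * a)) :
    0 < 1 / 2 * logb 2 r ∧ 1 / 2 * logb 2 r < a := by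
  have hlog : logb 2 r < 2 * a := by
    rw [logb_lt_iff_lt_rpow one_lt_two (by linarith), ← Nat.cast_ofNat, ← Nat.cast_mul,
      rpow_natCast]
    exact_mod_cast h2
  constructor
  · have := logb_pos one_lt_two h1
    positivity
  · linarith

theorem stmt_5_general (a : ℕ) (ha : 2 ≤ a) (p q s : ℝ) (hpq : q ≤ p) (hqs : s < q) (hs : 0 < s)
    (hsm : (6 * ((2 : ℝ) ^ a - 1) * p - 3 * ((2 : ℝ) ^ a - 2) * q) /
      ((2 : ℝ) ^ a - (4 : ℝ) ^ a + (8 : ℝ) ^ a) < s) :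
    (0 < (2 : ℝ) ^ (2 * a) * s + 6 * (q - p) ∧ 0 < 3 * q - s) ∧
    (0 < bstar p q s a ∧ bstar p q s a < a) ∧
    ∀ b : ℝ, 0 ≤ b → b ≤ a → hbar1 p q s a b ≤ hbar1 p q s a (bstar p q s a) := by
  have hA : (2 : ℝ) ≤ 2 ^ a := le_self_pow₀ one_le_two (by omega)
  have h2a : (2 : ℝ) ^ (2 * a) = ((2 : ℝ) ^ a) ^ 2 := pow_mul' 2 2 a
  have h4a : (4 : ℝ) ^ a = ((2 : ℝ) ^ a) ^ 2 := by rw [← h2a, pow_mul]; norm_num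
  have h8a : (8 : ℝ) ^ a = ((2 : ℝ) ^ a) ^ 3 := by rw [← pow_mul, mul_comm, pow_mul]; norm_num
  rw [h4a, h8a] at hsm
  have hβ : 0 < 3 * q - s := by linarith
  have hr1 := rsbm_one_lt_ratio hA hs hqs hsm
  have hγ : 0 < ((2 : ℝ) ^ a) ^ 2 * s + 6 * (q - p) := by linarith [(one_lt_div hβ).mp hr1]
  have hrA := rsbm_ratio_lt_sq (A := 2 ^ a) (by linarith) hpq hs hqs
  rw [← h2a] at hr1 hrA hγ
  refine ⟨⟨hγ, hβ⟩, half_logb_two_mem_Ioo hr1 hrA, fun b _ _ => ?_⟩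
  rw [hbar1_eq_hbarNum, hbar1_eq_hbarNum]
  refine div_le_div_of_nonneg_right ?_
    (by linarith [rsbm_denom_pos hA (by linarith : (0 : ℝ) ≤ q) hpq hs])
  refine hbarNum_le_of_sq_mul_eq (by linarith) hβ.le (rpow_pos_of_pos two_pos b)
    (rpow_pos_of_pos two_pos _).ne' ?_
  rw [bstar, rpow_half_logb_sq two_pos (by norm_num) (div_pos hγ hβ), div_mul_cancel₀ _ hβ.ne',
    h2a]

/-- In the twitter-like regime, for `s_m < s < s_2`, the critical merging parameter
`b*` is well defined, lies strictly between `0` and `a`, and maximises the hierarchy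
estimate `hbar1` over `b ∈ [0, a]`. -/
theorem stmt_5 (a : ℕ) (ha : 2 ≤ a) (p q s : ℝ) (hpq : q ≤ p) (hqs : s < q) (hs : 0 < s)
    (hsm : (6 * ((2 : ℝ) ^ a - 1) * p - 3 * ((2 : ℝ) ^ a - 2) * q) /
      ((2 : ℝ) ^ a - (4 : ℝ) ^ a + (8 : ℝ) ^ a) < s)
    (hs2 : s < 3 / 7 * (((4 : ℝ) ^ a - 12) * q + 12 * p) / (4 : ℝ) ^ a) :
    (0 < (2 : ℝ) ^ (2 * a) * s + 6 * (q - p) ∧ 0 < 3 * q - s) ∧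
    (0 < bstar p q s a ∧ bstar p q s a < a) ∧
    ∀ b : ℝ, 0 ≤ b → b ≤ a → hbar1 p q s a b ≤ hbar1 p q s a (bstar p q s a) :=
  stmt_5_general a ha p q s hpq hqs hs hsm
end

section
/- Let $a \geq 2$ be an integer and $p \geq q > s > 0$ reals with $s \geq s_2 := \frac{3}{7} \cdot \frac{(4^a - 12)q + 12p}{4^a}$ and $s \leq s_{\max} := \frac{2(2^a - 1)}{2^a(2^a+1)} p + \frac{(2^a - 2)(2^a - 1)}{2^a(2^a+1)} q$. Define $D = 2^a(2p-3q+s) + 4^a(q+s) - 2p + 2q$ and $H(\tilde R) = \bar h_1(a - \log_2 \tilde R)$ for real $\tilde R \in [1, 2^a]$, where $\bar h_1(b) = \frac{2^{-b}(2^a - 2^b)\left(6p + 3(2^{a+b} - 2)q - 2^a(2^a + 2^b)s\right)}{3D}$. Then for every integer $\tilde R$ with $1 \leq \tilde R \leq 2^a$ one has $H(\tilde R) \leq H(2)$; i.e., above the threshold $s_2$ the two-class merged ranking is optimal among all uniform merged rankings. -/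
lemma Hmerge_eq (p q s : ℝ) (a : ℕ) (r : ℝ) (hr : 0 < r) :
    Hmerge p q s a r =
      ((r - 1) * ((6 * p - 6 * q - ((2:ℝ)^a)^2 * s) * r + ((2:ℝ)^a)^2 * (3 * q - s)) / r) /
        (3 * ((2:ℝ)^a * (2 * p - 3 * q + s) + ((2:ℝ)^a)^2 * (q + s)
          - 2 * p + 2 * q)) := by
  unfold Hmerge hbar1
  have h2 : (0:ℝ) < 2 := by norm_num
  have hlog : (2:ℝ) ^ (Real.logb 2 r) = r := Real.rpow_logb h2 (by norm_num) hr
  have hA : (2:ℝ) ^ ((a:ℝ)) = (2:ℝ) ^ a := Real.rpow_natCast 2 a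
  have h4 : (4:ℝ) ^ ((a:ℝ)) = ((2:ℝ)^a)^2 := by
    rw [Real.rpow_natCast, show (4:ℝ) = 2 ^ 2 by norm_num, ← pow_mul, mul_comm, pow_mul]
  have hb : (2:ℝ) ^ ((a:ℝ) - Real.logb 2 r) = (2:ℝ)^a / r := by
    rw [Real.rpow_sub h2, hA, hlog]
  have hnb : (2:ℝ) ^ (-((a:ℝ) - Real.logb 2 r)) = r / (2:ℝ)^a := by
    rw [Real.rpow_neg h2.le, hb, inv_div]
  have hab : (2:ℝ) ^ ((a:ℝ) + ((a:ℝ) - Real.logb 2 r)) = (2:ℝ)^a * ((2:ℝ)^a / r) := by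
    rw [Real.rpow_add h2, hA, hb]
  rw [hnb, hab, hb, hA, h4]
  have hA0 : ((2:ℝ)^a) ≠ 0 := by positivity
  congr 1
  field_simp
  ring

/-- In the twitter-like regime, for `s₂ ≤ s ≤ s_max`, the two-class merged ranking is
optimal among all uniform merged rankings. -/
theorem stmt_6 (a : ℕ) (ha : 2 ≤ a) (p q s : ℝ) (hpq : q ≤ p) (hqs : s < q) (hs : 0 < s)
    (hs2 : 3 / 7 * (((4 : ℝ) ^ a - 12) * q + 12 * p) / (4 : ℝ) ^ a ≤ s)
    (hsmax : s ≤ 2 * ((2 : ℝ) ^ a - 1) / ((2 : ℝ) ^ a * ((2 : ℝ) ^ a + 1)) * p +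
      ((2 : ℝ) ^ a - 2) * ((2 : ℝ) ^ a - 1) / ((2 : ℝ) ^ a * ((2 : ℝ) ^ a + 1)) * q) :
    ∀ Rt : ℕ, 1 ≤ Rt → Rt ≤ 2 ^ a →
      Hmerge p q s a (Rt : ℝ) ≤ Hmerge p q s a 2 := by
  intro Rt hRt1 hRt2
  have hr0 : (0:ℝ) < (Rt : ℝ) := by exact_mod_cast Nat.lt_of_lt_of_le Nat.zero_lt_one hRt1
  rw [Hmerge_eq p q s a (Rt : ℝ) hr0, Hmerge_eq p q s a 2 (by norm_num)]
  set A : ℝ := (2:ℝ)^a with hAdef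
  have hApos : (0:ℝ) < A := by positivity
  have hA4 : (4:ℝ) ≤ A := by
    rw [hAdef]
    calc (4:ℝ) = 2 ^ 2 := by norm_num
    _ ≤ 2 ^ a := by
        apply pow_le_pow_right₀ (by norm_num) ha
  have hA2pos : (0:ℝ) < A ^ 2 := by positivity
  have hq0 : 0 < q := lt_trans hs hqs
  have hp0 : 0 < p := lt_of_lt_of_le hq0 hpq
  have hD : 0 < A * (2 * p - 3 * q + s) + A ^ 2 * (q + s) - 2 * p + 2 * q := by
    nlinarith [mul_pos (show (0:ℝ) < A - 1 by linarith) hp0,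
      mul_nonneg (mul_nonneg (show (0:ℝ) ≤ A - 1 by linarith) (show (0:ℝ) ≤ A - 2 by linarith)) hq0.le,
      mul_pos (mul_pos hApos (show (0:ℝ) < A + 1 by linarith)) hs]
  have h4A : (4:ℝ) ^ a = A ^ 2 := by
    rw [hAdef, show (4:ℝ) = 2 ^ 2 by norm_num, ← pow_mul, mul_comm, pow_mul]
  rw [h4A] at hs2
  have hs2' : 3 / 7 * ((A ^ 2 - 12) * q + 12 * p) ≤ s * A ^ 2 :=
    (div_le_iff₀ hA2pos).mp hs2
  have hC2 : 0 < A ^ 2 * (3 * q - s) := by nlinarith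
  have h6 : 6 * (6 * p - 6 * q - A ^ 2 * s) + A ^ 2 * (3 * q - s) ≤ 0 := by linarith
  have hC1 : 6 * p - 6 * q - A ^ 2 * s ≤ 0 := by linarith
  have hK : ∀ r : ℝ, r = 1 ∨ r = 2 ∨ 3 ≤ r →
      0 ≤ -((r - 2) * (2 * r * (6 * p - 6 * q - A ^ 2 * s) + A ^ 2 * (3 * q - s))) := by
    rintro r (rfl | rfl | hr3)
    · nlinarith [mul_pos hA2pos (show (0:ℝ) < q - s by linarith)]
    · norm_num
    · have hneg : 2 * r * (6 * p - 6 * q - A ^ 2 * s) + A ^ 2 * (3 * q - s) ≤ 0 := by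
        nlinarith [mul_nonneg (show (0:ℝ) ≤ r - 3 by linarith)
          (show (0:ℝ) ≤ -(6 * p - 6 * q - A ^ 2 * s) by linarith)]
      nlinarith [mul_nonneg (show (0:ℝ) ≤ r - 2 by linarith)
        (show (0:ℝ) ≤ -(2 * r * (6 * p - 6 * q - A ^ 2 * s) + A ^ 2 * (3 * q - s)) by linarith)]
  have hKr : 0 ≤ -(((Rt:ℝ) - 2) * (2 * (Rt:ℝ) * (6 * p - 6 * q - A ^ 2 * s) + A ^ 2 * (3 * q - s))) := by
    apply hK
    rcases Nat.lt_or_ge Rt 3 with h3 | h3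
    · interval_cases Rt
      · left; norm_num
      · right; left; norm_num
    · right; right; exact_mod_cast h3
  have hDpos : (0:ℝ) < 3 * (A * (2 * p - 3 * q + s) + A ^ 2 * (q + s) - 2 * p + 2 * q) := by
    linarith
  rw [div_le_div_iff_of_pos_right hDpos, div_le_div_iff₀ hr0 (by norm_num : (0:ℝ) < 2)]
  have hring : (2 - 1) * ((6 * p - 6 * q - A ^ 2 * s) * 2 + A ^ 2 * (3 * q - s)) * (Rt:ℝ) -
      ((Rt:ℝ) - 1) * ((6 * p - 6 * q - A ^ 2 * s) * (Rt:ℝ) + A ^ 2 * (3 * q - s)) * 2 =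
      -(((Rt:ℝ) - 2) * (2 * (Rt:ℝ) * (6 * p - 6 * q - A ^ 2 * s) + A ^ 2 * (3 * q - s))) := by
    ring
  linarith [hKr, hring.ge, hring.le]
end

section
/- Let $a \geq 2$ be an integer and $p, q, s$ reals with $p \geq q > s > 0$. Define $D = 2^a(2p-3q+s) + 4^a(q+s) - 2p + 2q$ and $\bar h_1(b) = \frac{2^{-b}(2^a - 2^b)\left(6p + 3(2^{a+b} - 2)q - 2^a(2^a + 2^b)s\right)}{3D}$. Then $D > 0$, $\bar h_1(a) = 0$, and $\bar h_1(a-1) > \bar h_1(a)$; i.e., the merged ranking with two classes always has strictly positive hierarchy estimate and strictly beats the trivial one-class ranking. -/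
/-- In the twitter-like regime, the denominator `D` is positive, the trivial one-class
ranking (`b = a`) has zero hierarchy estimate, and the two-class merged ranking
(`b = a - 1`) strictly beats it. -/
theorem stmt_7 (a : ℕ) (ha : 2 ≤ a) (p q s : ℝ) (hpq : q ≤ p) (hqs : s < q) (hs : 0 < s) :
    0 < (2 : ℝ) ^ a * (2 * p - 3 * q + s) + (4 : ℝ) ^ a * (q + s) - 2 * p + 2 * q ∧
    hbar1 p q s a (a : ℝ) = 0 ∧
    hbar1 p q s a (a : ℝ) < hbar1 p q s a ((a : ℝ) - 1) := by
  set x : ℝ := (2 : ℝ) ^ (a : ℝ) with hxdef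
  have hx0 : (0 : ℝ) < x := Real.rpow_pos_of_pos two_pos _
  have hx4 : (4 : ℝ) ≤ x := by
    have h2 : ((2 : ℕ) : ℝ) ≤ (a : ℝ) := by exact_mod_cast ha
    have := Real.rpow_le_rpow_of_exponent_le one_le_two h2
    have h22 : (2 : ℝ) ^ ((2 : ℕ) : ℝ) = 4 := by
      rw [Real.rpow_natCast]; norm_num
    rw [h22] at this; exact this
  have hnat : (2 : ℝ) ^ a = x := (Real.rpow_natCast 2 a).symm
  have h4nat : (4 : ℝ) ^ a = x * x := by
    have : (4 : ℝ) ^ a = ((2 : ℝ) * 2) ^ a := by norm_num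
    rw [this, mul_pow, hnat]
  have h4r : (4 : ℝ) ^ (a : ℝ) = x * x := by
    rw [Real.rpow_natCast]; exact h4nat
  have hD : 0 < x * (2 * p - 3 * q + s) + (x * x) * (q + s) - 2 * p + 2 * q := by
    nlinarith [mul_pos hs hx0, mul_nonneg (sub_nonneg.2 hpq) (by linarith : (0:ℝ) ≤ x - 1),
      mul_nonneg (mul_nonneg (by linarith : (0:ℝ) ≤ q) (by linarith : (0:ℝ) ≤ x - 1))
        (by linarith : (0:ℝ) ≤ x - 2), mul_pos hx0 hx0]
  refine ⟨by rw [hnat, h4nat]; exact hD, ?_, ?_⟩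
  · simp [hbar1, sub_self]
  · have hz : hbar1 p q s a (a : ℝ) = 0 := by simp [hbar1, sub_self]
    rw [hz]
    have e2 : (2 : ℝ) ^ ((a : ℝ) - 1) = x / 2 := by
      rw [Real.rpow_sub two_pos, Real.rpow_one]
    have e1 : (2 : ℝ) ^ (-((a : ℝ) - 1)) = 2 / x := by
      rw [Real.rpow_neg two_pos.le, e2]
      field_simp
    have e3 : (2 : ℝ) ^ ((a : ℝ) + ((a : ℝ) - 1)) = x * x / 2 := by
      rw [Real.rpow_add two_pos, e2]; ring
    have hval : hbar1 p q s a ((a : ℝ) - 1)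
        = (6 * p - 6 * q + (3 / 2) * (x * x) * (q - s)) /
          (3 * (x * (2 * p - 3 * q + s) + (x * x) * (q + s) - 2 * p + 2 * q)) := by
      unfold hbar1
      rw [e1, e2, e3, h4r, ← hxdef]
      rw [div_eq_div_iff (by positivity) (by positivity)]
      field_simp
      ring
    rw [hval]
    apply div_pos
    · nlinarith [mul_pos hx0 hx0]
    · linarith
end

section
/- Let $a \geq 1$ be an integer, $p > 0$ and $q \geq 0$ reals, and fix a real $b$ with $0 \leq b < a$. Then the function $s \mapsto \bar h_1(b; p, q, s, a) = \frac{2^{-b}(2^a - 2^b)\left(6p + 3(2^{a+b} - 2)q - 2^a(2^a + 2^b)s\right)}{3\left(2^a(2p-3q+s) + 4^a(q+s) - 2p + 2q\right)}$ is strictly decreasing on the interval of $s \geq 0$ (where the denominator is strictly positive). -/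
/-- For a fixed merging parameter `0 ≤ b < a`, the hierarchy estimate `hbar1` is a
strictly decreasing function of the backward-link probability `s` on the set of
nonnegative `s` where the denominator is strictly positive. -/
theorem stmt_8 (a : ℕ) (ha : 1 ≤ a) (p q : ℝ) (hp : 0 < p) (hq : 0 ≤ q)
    (b : ℝ) (hb0 : 0 ≤ b) (hba : b < a) :
    StrictAntiOn (fun s : ℝ => hbar1 p q s a b)
      {s : ℝ | 0 ≤ s ∧ 0 < (2 : ℝ) ^ (a : ℝ) * (2 * p - 3 * q + s) +
        (4 : ℝ) ^ (a : ℝ) * (q + s) - 2 * p + 2 * q} := by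
  intro x hx y hy hxy
  obtain ⟨hx0, hxD⟩ := hx
  obtain ⟨hy0, hyD⟩ := hy
  have h4 : (4 : ℝ) ^ (a : ℝ) = ((2 : ℝ) ^ (a : ℝ)) ^ 2 := by
    rw [show (4 : ℝ) = 2 ^ (2:ℕ) by norm_num, ← Real.rpow_natCast ((2:ℝ)^(a:ℝ)) 2,
      ← Real.rpow_natCast (2:ℝ) 2, ← Real.rpow_mul (by norm_num), ← Real.rpow_mul (by norm_num)]
    ring_nf
  have hab : (2 : ℝ) ^ ((a : ℝ) + b) = (2 : ℝ) ^ (a : ℝ) * (2 : ℝ) ^ b :=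
    Real.rpow_add (by norm_num) _ _
  have hnb : (2 : ℝ) ^ (-b) = ((2 : ℝ) ^ b)⁻¹ := Real.rpow_neg (by norm_num) b
  set X := (2 : ℝ) ^ (a : ℝ) with hXdef
  set B := (2 : ℝ) ^ b with hBdef
  have hB : 0 < B := Real.rpow_pos_of_pos (by norm_num) b
  have hB1 : 1 ≤ B := Real.one_le_rpow (by norm_num) hb0
  have hX2 : 2 ≤ X := by
    calc (2:ℝ) = 2 ^ (1:ℝ) := (Real.rpow_one 2).symm
    _ ≤ X := Real.rpow_le_rpow_left_iff (by norm_num : (1:ℝ) < 2) |>.mpr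
        (by exact_mod_cast ha)
  have hBX : B < X := by
    exact Real.rpow_lt_rpow_left_iff (by norm_num : (1:ℝ) < 2) |>.mpr hba
  rw [h4] at hxD hyD
  simp only [hbar1, hnb, hab, h4, ← hXdef, ← hBdef]
  rw [div_lt_div_iff₀ (by positivity) (by positivity)]
  have hkey : 0 < (6*p + 3*(X*B-2)*q) * (X + X^2) + X*(X+B) * (X*(2*p-3*q) + X^2*q - 2*p + 2*q) := by
    have h1 : 0 ≤ 3*(X*B-2)*(1+X) + (X+B)*(X-1)*(X-2) := by
      have e1 : (0:ℝ) ≤ X*B - 2 := by nlinarith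
      have e2 : (0:ℝ) ≤ (X+B)*((X-1)*(X-2)) :=
        mul_nonneg (by linarith) (mul_nonneg (by linarith) (by linarith))
      nlinarith
    have h2 : 0 < 2*X^2 + 4*X + 6 + 2*B*(X-1) := by nlinarith
    have h3 : 0 < X * (p*(2*X^2+4*X+6+2*B*(X-1)) + q*(3*(X*B-2)*(1+X)+(X+B)*(X-1)*(X-2))) :=
      mul_pos (by linarith) (add_pos_of_pos_of_nonneg (mul_pos hp h2) (mul_nonneg hq h1))
    nlinarith [h3]
  have hF : 0 < B⁻¹ * (X - B) := mul_pos (inv_pos.mpr hB) (sub_pos.mpr hBX)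
  have hprod := mul_pos (mul_pos hF (sub_pos.mpr hxy)) hkey
  linarith [hprod]
end

section
/- Let $a \geq 2$ be an integer and $p, q \geq 0$ reals, not both zero. Set $s_m = \frac{6(2^a - 1)p - 3(2^a - 2)q}{2^a - 4^a + 8^a}$. Then, with $\bar h_1(b; p,q,s,a) = \frac{2^{-b}(2^a - 2^b)\left(6p + 3(2^{a+b} - 2)q - 2^a(2^a + 2^b)s\right)}{3\left(2^a(2p-3q+s) + 4^a(q+s) - 2p + 2q\right)}$, the identity $\bar h_1(0; p, q, s_m, a) = \bar h_1\!\left(a - \log_2(2^a - 1);\, p, q, s_m, a\right)$ holds; i.e., at $s = s_m$ the planted ranking with $2^a$ classes and the merged ranking with $2^a - 1$ classes have the same hierarchy estimate. -/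
/-!
Write `x = 2^a`. The merging exponent `b = a - log₂(2^a - 1)` is the one with `2^b = x/(x-1)`, so
after substituting `2^a` and `2^b` both estimates become rational functions of `x` over the same
denominator. Clearing `x - 1`, the difference of the numerators is
`6(x-1)p - 3(x-2)q - (x - x² + x³)s`, which is affine in `s` and vanishes exactly at `s = s_m`.
-/

open Real

noncomputable def hbarRat (p q s x y : ℝ) : ℝ :=
  y⁻¹ * (x - y) * (6 * p + 3 * (x * y - 2) * q - x * (x + y) * s) /
    (3 * (x * (2 * p - 3 * q + s) + x ^ 2 * (q + s) - 2 * p + 2 * q))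

lemma hbar1_eq_hbarRat (p q s : ℝ) (a : ℕ) (b : ℝ) :
    hbar1 p q s a b = hbarRat p q s (2 ^ a) (2 ^ b) := by
  have h4 : (4 : ℝ) ^ (a : ℝ) = ((2 : ℝ) ^ a) ^ 2 := by
    rw [rpow_natCast, ← pow_mul, mul_comm, pow_mul]
    norm_num
  rw [hbar1, hbarRat, rpow_neg zero_le_two, rpow_add zero_lt_two, rpow_natCast, h4]

lemma two_rpow_sub_logb_two_pow_sub_one {a : ℕ} (ha : 1 < (2 : ℝ) ^ a) :
    (2 : ℝ) ^ ((a : ℝ) - logb 2 (2 ^ a - 1)) = 2 ^ a / (2 ^ a - 1) := by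
  rw [rpow_sub zero_lt_two, rpow_natCast, rpow_logb zero_lt_two (by norm_num) (by linarith)]

lemma hbarRat_one_eq_hbarRat_div_sub_one {p q s x : ℝ} (hx : 1 < x)
    (hs : (x - x ^ 2 + x ^ 3) * s = 6 * (x - 1) * p - 3 * (x - 2) * q) :
    hbarRat p q s x 1 = hbarRat p q s x (x / (x - 1)) := by
  have hx0 : x ≠ 0 := by positivity
  have hx1 : x - 1 ≠ 0 := sub_ne_zero.mpr hx.ne'
  unfold hbarRat
  congr 1
  field_simp
  linear_combination -hs

theorem stmt_9_general (a : ℕ) (ha : 2 ≤ a) (p q : ℝ) :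
    hbar1 p q ((6 * ((2 : ℝ) ^ a - 1) * p - 3 * ((2 : ℝ) ^ a - 2) * q) /
        ((2 : ℝ) ^ a - (4 : ℝ) ^ a + (8 : ℝ) ^ a)) a 0 =
      hbar1 p q ((6 * ((2 : ℝ) ^ a - 1) * p - 3 * ((2 : ℝ) ^ a - 2) * q) /
        ((2 : ℝ) ^ a - (4 : ℝ) ^ a + (8 : ℝ) ^ a)) a
        ((a : ℝ) - Real.logb 2 ((2 : ℝ) ^ a - 1)) := by
  have hx : 1 < (2 : ℝ) ^ a := one_lt_pow₀ one_lt_two (by omega)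
  have h4 : (4 : ℝ) ^ a = ((2 : ℝ) ^ a) ^ 2 := by rw [← pow_mul, mul_comm, pow_mul]; norm_num
  have h8 : (8 : ℝ) ^ a = ((2 : ℝ) ^ a) ^ 3 := by rw [← pow_mul, mul_comm, pow_mul]; norm_num
  rw [hbar1_eq_hbarRat, hbar1_eq_hbarRat, rpow_zero, two_rpow_sub_logb_two_pow_sub_one hx, h4, h8]
  apply hbarRat_one_eq_hbarRat_div_sub_one hx
  have hm : (2 : ℝ) ^ a - ((2 : ℝ) ^ a) ^ 2 + ((2 : ℝ) ^ a) ^ 3 ≠ 0 := by nlinarith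
  exact mul_div_cancel₀ _ hm

/-- At the resolution threshold `s = s_m`, the planted ranking with `2^a` classes and
the merged ranking with `2^a - 1` classes have the same hierarchy estimate. -/
theorem stmt_9 (a : ℕ) (ha : 2 ≤ a) (p q : ℝ) (hp : 0 ≤ p) (hq : 0 ≤ q)
    (hpq : ¬(p = 0 ∧ q = 0)) :
    hbar1 p q ((6 * ((2 : ℝ) ^ a - 1) * p - 3 * ((2 : ℝ) ^ a - 2) * q) /
        ((2 : ℝ) ^ a - (4 : ℝ) ^ a + (8 : ℝ) ^ a)) a 0 =
      hbar1 p q ((6 * ((2 : ℝ) ^ a - 1) * p - 3 * ((2 : ℝ) ^ a - 2) * q) /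
        ((2 : ℝ) ^ a - (4 : ℝ) ^ a + (8 : ℝ) ^ a)) a
        ((a : ℝ) - Real.logb 2 ((2 : ℝ) ^ a - 1)) :=
  stmt_9_general a ha p q
end

section
/- Let $a \geq 2$ be an integer and $p, q, s$ reals with $q \geq 0$, $s > 0$, $3q - s > 0$, $2^{2a} s + 6(q - p) > 0$, and denominator $D = 2^a(2p-3q+s) + 4^a(q+s) - 2p + 2q > 0$. Consider the real function $b \mapsto \bar h_1(b) = \frac{2^{-b}(2^a - 2^b)\left(6p + 3(2^{a+b} - 2)q - 2^a(2^a + 2^b)s\right)}{3D}$ on $\mathbb{R}$. Then its derivative vanishes at a point $b \in \mathbb{R}$ if and only if $b = b^* := \frac{1}{2}\log_2 \frac{2^{2a} s + 6(q - p)}{3q - s}$; i.e., $b^*$ is the unique critical point of $\bar h_1$. -/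
/-- `b* = (1/2) log₂((2^(2a) s + 6(q-p))/(3q - s))` is the unique critical point of
the map `b ↦ hbar1 p q s a b` on `ℝ`. -/
theorem stmt_11 (a : ℕ) (ha : 2 ≤ a) (p q s : ℝ) (hq : 0 ≤ q) (hs : 0 < s)
    (h3qs : 0 < 3 * q - s) (hnum : 0 < (2 : ℝ) ^ (2 * a) * s + 6 * (q - p))
    (hD : 0 < (2 : ℝ) ^ (a : ℝ) * (2 * p - 3 * q + s) + (4 : ℝ) ^ (a : ℝ) * (q + s)
      - 2 * p + 2 * q) :
    ∀ b : ℝ, deriv (hbar1 p q s a) b = 0 ↔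
      b = (1 / 2) * Real.logb 2 (((2 : ℝ) ^ (2 * a) * s + 6 * (q - p)) / (3 * q - s)) := by
  set A : ℝ := (2 : ℝ) ^ (a : ℝ) with hA
  have hApos : 0 < A := Real.rpow_pos_of_pos two_pos _
  have hA2 : A ^ 2 = (2 : ℝ) ^ (2 * a) := by
    rw [hA, ← Real.rpow_natCast ((2 : ℝ) ^ (a : ℝ)) 2, ← Real.rpow_mul (by norm_num),
      ← Real.rpow_natCast 2 (2 * a)]
    push_cast
    ring_nf
  set α : ℝ := A * (3 * q - s) with hα
  set β : ℝ := 6 * p - 6 * q - A ^ 2 * s with hβ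
  set C : ℝ := 3 * (A * (2 * p - 3 * q + s) + (4 : ℝ) ^ (a : ℝ) * (q + s)
      - 2 * p + 2 * q) with hC
  have hCne : C ≠ 0 := by positivity
  have hαpos : 0 < α := mul_pos hApos h3qs
  -- rewrite hbar1
  have hfun : hbar1 p q s a = fun b =>
      ((A * α - β) + A * β * (2 : ℝ) ^ (-b) - α * (2 : ℝ) ^ b) / C := by
    funext b
    have hx : (0 : ℝ) < (2 : ℝ) ^ b := Real.rpow_pos_of_pos two_pos _
    have hab : (2 : ℝ) ^ ((a : ℝ) + b) = A * (2 : ℝ) ^ b := Real.rpow_add two_pos _ _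
    have hnb : (2 : ℝ) ^ (-b) = ((2 : ℝ) ^ b)⁻¹ := Real.rpow_neg (by norm_num) _
    unfold hbar1
    rw [hab, hnb, ← hA, ← hC, hα, hβ]
    field_simp
    ring
  intro b
  have hx : (0 : ℝ) < (2 : ℝ) ^ b := Real.rpow_pos_of_pos two_pos _
  have hnb : (2 : ℝ) ^ (-b) = ((2 : ℝ) ^ b)⁻¹ := Real.rpow_neg (by norm_num) _
  -- compute the derivative
  have h2b : HasDerivAt (fun b : ℝ => (2 : ℝ) ^ b) ((2 : ℝ) ^ b * Real.log 2) b :=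
    (Real.hasStrictDerivAt_const_rpow two_pos b).hasDerivAt
  have h2nb : HasDerivAt (fun b : ℝ => (2 : ℝ) ^ (-b))
      ((2 : ℝ) ^ (-b) * Real.log 2 * (-1)) b := by
    have h1 : HasDerivAt (fun b : ℝ => (2 : ℝ) ^ b) ((2 : ℝ) ^ (-b) * Real.log 2) (-b) :=
      (Real.hasStrictDerivAt_const_rpow two_pos (-b)).hasDerivAt
    exact h1.comp b ((hasDerivAt_id b).neg)
  have hd : HasDerivAt (fun b : ℝ =>
      ((A * α - β) + A * β * (2 : ℝ) ^ (-b) - α * (2 : ℝ) ^ b) / C)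
      ((0 + A * β * ((2 : ℝ) ^ (-b) * Real.log 2 * (-1)) - α * ((2 : ℝ) ^ b * Real.log 2)) / C)
      b :=
    (((hasDerivAt_const b (A * α - β)).add (h2nb.const_mul (A * β))).sub
      (h2b.const_mul α)).div_const C
  rw [hfun, hd.deriv]
  rw [div_eq_zero_iff, or_iff_left hCne]
  have hlog : Real.log 2 ≠ 0 := ne_of_gt (Real.log_pos one_lt_two)
  have hfac : 0 + A * β * ((2 : ℝ) ^ (-b) * Real.log 2 * (-1)) - α * ((2 : ℝ) ^ b * Real.log 2)
      = (-Real.log 2) * (A * β * (2 : ℝ) ^ (-b) + α * (2 : ℝ) ^ b) := by ring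
  rw [hfac, mul_eq_zero, or_iff_right (by simpa using hlog)]
  -- algebraic manipulation
  set K : ℝ := ((2 : ℝ) ^ (2 * a) * s + 6 * (q - p)) / (3 * q - s) with hK
  have hKpos : 0 < K := div_pos hnum h3qs
  have hKval : -(A * β) / α = K := by
    rw [hK, hβ, hα, hA2]
    field_simp
    ring
  have hsq : (2 : ℝ) ^ b * (2 : ℝ) ^ b = (2 : ℝ) ^ (2 * b) := by
    rw [← Real.rpow_add two_pos]; ring_nf
  constructor
  · intro h
    have key : (2 : ℝ) ^ (2 * b) = K := by
      rw [← hKval, ← hsq]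
      have h' : α * ((2 : ℝ) ^ b * (2 : ℝ) ^ b) = -(A * β) := by
        have := h
        rw [hnb] at this
        field_simp at this ⊢
        nlinarith [this]
      field_simp [ne_of_gt hαpos] at h' ⊢
      linarith [h']
    have : Real.logb 2 ((2 : ℝ) ^ (2 * b)) = Real.logb 2 K := by rw [key]
    rw [Real.logb_rpow (by norm_num) (by norm_num)] at this
    rw [hK] at *
    linarith [this]
  · intro h
    have h2b' : 2 * b = Real.logb 2 K := by rw [h]; ring
    have key : (2 : ℝ) ^ (2 * b) = K := by
      rw [h2b', Real.rpow_logb (by norm_num) (by norm_num) hKpos]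
    have h' : α * ((2 : ℝ) ^ b * (2 : ℝ) ^ b) = -(A * β) := by
      rw [hsq, key, ← hKval]
      field_simp [ne_of_gt hαpos]
    rw [hnb]
    have heq : A * β * ((2 : ℝ) ^ b)⁻¹ + α * (2 : ℝ) ^ b
        = (A * β + α * ((2 : ℝ) ^ b * (2 : ℝ) ^ b)) * ((2 : ℝ) ^ b)⁻¹ := by
      field_simp
    rw [heq]
    have : A * β + α * ((2 : ℝ) ^ b * (2 : ℝ) ^ b) = 0 := by rw [h']; ring
    rw [this, zero_mul]
end

section
/- Let $a \geq 2$ be an integer and $p > 0$ a real. Set $s_i = \frac{12p}{3 \cdot 2^a + 2^{2a+1} - 2}$ and $D_0 = 2^a(2p + s_i) + 4^a s_i - 2p$. Then the identity $\frac{(2^a - 1)\left(6p - 2^a(2^a + 1)s_i\right)}{3 D_0} = \frac{3 \cdot 2^{2a-1} s_i - 6p}{3 D_0}$ holds; i.e., in the military-like hierarchy ($q = 0$), at $s = s_i$ the planted ranking ($b=0$) and the inverted two-class ranking ($b = a-1$) have the same hierarchy estimate: $\bar h_1(0; p, 0, s_i, a) = \bar h_1^{(i)}(a-1; p, 0, s_i,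 a)$. -/
/-! Both sides have the denominator `3 D₀`. With `x = 2 ^ a` and `T = 3x + 2x² - 2`, so that
`s_i = 12p / T`, multiplying either numerator by `T / (6p)` gives `(x - 1)(x - 2)`. -/

lemma planted_numerator_eq_inverted_numerator {K : Type*} [Field K] [NeZero (2 : K)] (x p : K)
    (hT : 3 * x + 2 * x ^ 2 - 2 ≠ 0) :
    (x - 1) * (6 * p - x * (x + 1) * (12 * p / (3 * x + 2 * x ^ 2 - 2))) =
      3 * (x ^ 2 / 2) * (12 * p / (3 * x + 2 * x ^ 2 - 2)) - 6 * p := by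
  set T := 3 * x + 2 * x ^ 2 - 2 with hT_def
  field_simp
  rw [hT_def]
  ring

lemma two_pow_two_mul_add_one (a : ℕ) : (2 : ℝ) ^ (2 * a + 1) = 2 * ((2 : ℝ) ^ a) ^ 2 := by
  ring

lemma two_pow_two_mul_sub_one {a : ℕ} (ha : 1 ≤ a) :
    (2 : ℝ) ^ (2 * a - 1) = ((2 : ℝ) ^ a) ^ 2 / 2 := by
  rw [eq_div_iff two_ne_zero, ← pow_succ, Nat.sub_add_cancel (by omega), ← pow_mul, mul_comm]

theorem stmt_12_general (a : ℕ) (ha : 2 ≤ a) (p : ℝ) :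
    ((2 : ℝ) ^ a - 1) *
        (6 * p - (2 : ℝ) ^ a * ((2 : ℝ) ^ a + 1) *
          (12 * p / (3 * (2 : ℝ) ^ a + (2 : ℝ) ^ (2 * a + 1) - 2))) /
      (3 * ((2 : ℝ) ^ a * (2 * p + 12 * p / (3 * (2 : ℝ) ^ a + (2 : ℝ) ^ (2 * a + 1) - 2)) +
        (4 : ℝ) ^ a * (12 * p / (3 * (2 : ℝ) ^ a + (2 : ℝ) ^ (2 * a + 1) - 2)) - 2 * p)) =
    (3 * (2 : ℝ) ^ (2 * a - 1) *
        (12 * p / (3 * (2 : ℝ) ^ a + (2 : ℝ) ^ (2 * a + 1) - 2)) - 6 * p) /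
      (3 * ((2 : ℝ) ^ a * (2 * p + 12 * p / (3 * (2 : ℝ) ^ a + (2 : ℝ) ^ (2 * a + 1) - 2)) +
        (4 : ℝ) ^ a * (12 * p / (3 * (2 : ℝ) ^ a + (2 : ℝ) ^ (2 * a + 1) - 2)) - 2 * p)) := by
  rw [two_pow_two_mul_add_one, two_pow_two_mul_sub_one (by omega)]
  have hx : (1 : ℝ) ≤ 2 ^ a := one_le_pow₀ one_le_two
  congr 1
  exact planted_numerator_eq_inverted_numerator _ p (by nlinarith)

/-- In the military-like hierarchy (`q = 0`), at `s = s_i = 12p/(3·2^a + 2^(2a+1) - 2)`,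
the planted ranking and the inverted two-class ranking have the same first-order
hierarchy estimate. -/
theorem stmt_12 (a : ℕ) (ha : 2 ≤ a) (p : ℝ) (hp : 0 < p) :
    ((2 : ℝ) ^ a - 1) *
        (6 * p - (2 : ℝ) ^ a * ((2 : ℝ) ^ a + 1) *
          (12 * p / (3 * (2 : ℝ) ^ a + (2 : ℝ) ^ (2 * a + 1) - 2))) /
      (3 * ((2 : ℝ) ^ a * (2 * p + 12 * p / (3 * (2 : ℝ) ^ a + (2 : ℝ) ^ (2 * a + 1) - 2)) +
        (4 : ℝ) ^ a * (12 * p / (3 * (2 : ℝ) ^ a + (2 : ℝ) ^ (2 * a + 1) - 2)) - 2 * p)) =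
    (3 * (2 : ℝ) ^ (2 * a - 1) *
        (12 * p / (3 * (2 : ℝ) ^ a + (2 : ℝ) ^ (2 * a + 1) - 2)) - 6 * p) /
      (3 * ((2 : ℝ) ^ a * (2 * p + 12 * p / (3 * (2 : ℝ) ^ a + (2 : ℝ) ^ (2 * a + 1) - 2)) +
        (4 : ℝ) ^ a * (12 * p / (3 * (2 : ℝ) ^ a + (2 : ℝ) ^ (2 * a + 1) - 2)) - 2 * p)) :=
  stmt_12_general a ha p
end

section
/- Let $a \geq 2$ be an integer and $p, q$ reals with $p \geq q \geq 0$ and $p > 0$. Define $s_m = \frac{6(2^a - 1)p - 3(2^a - 2)q}{2^a - 4^a + 8^a}$ and $s_{2,m} = \frac{6\left(2^{1-a}(q - p) + 2p - q\right)}{-3 \cdot 2^a + 2^{3a+1} + 4^a + 4}$. Then $s_{2,m} \leq s_m$; i.e., the resolution threshold of agony with quadratic penalty ($d = 2$) is at most that of agony with linear penalty ($d = 1$). -/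
/-!
Write `x = 2 ^ a`. Clearing the factor `2 ^ (1 - a) = 2 / x`, both thresholds share the numerator
`N = 2 (x - 1) p - (x - 2) q ≥ 0`: `s_m = 3 N / (x (x² - x + 1))` and
`s_{2,m} = 6 N / (x (2 x³ + x² - 3 x + 4))`. The comparison then reduces to
`2 (x² - x + 1) ≤ 2 x³ + x² - 3 x + 4`, i.e. `0 ≤ 2 x³ - x² - x + 2`, which holds for `x ≥ 1`.
-/

namespace AgonyThreshold

def numerator (x p q : ℝ) : ℝ := 2 * (x - 1) * p - (x - 2) * q

variable {x p q : ℝ}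

lemma numerator_nonneg (hx : 2 ≤ x) (hp : 0 ≤ p) (hqp : q ≤ p) : 0 ≤ numerator x p q := by
  unfold numerator
  nlinarith

lemma linear_eq (x p q : ℝ) :
    (6 * (x - 1) * p - 3 * (x - 2) * q) / (x - x ^ 2 + x ^ 3) =
      3 * numerator x p q / (x * (x ^ 2 - x + 1)) := by
  unfold numerator
  ring

lemma quadratic_eq (hx : x ≠ 0) :
    6 * (2 / x * (q - p) + 2 * p - q) / (-3 * x + 2 * x ^ 3 + x ^ 2 + 4) =
      6 * numerator x p q / (x * (2 * x ^ 3 + x ^ 2 - 3 * x + 4)) := by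
  unfold numerator
  rw [← div_div]
  congr 1
  · field_simp
    ring
  · ring

lemma quadratic_le_linear (hx : 2 ≤ x) (hp : 0 ≤ p) (hqp : q ≤ p) :
    6 * (2 / x * (q - p) + 2 * p - q) / (-3 * x + 2 * x ^ 3 + x ^ 2 + 4) ≤
      (6 * (x - 1) * p - 3 * (x - 2) * q) / (x - x ^ 2 + x ^ 3) := by
  rw [quadratic_eq (by positivity), linear_eq]
  have hN := numerator_nonneg hx hp hqp
  have hgap : 0 ≤ 2 * x ^ 3 - x ^ 2 - x + 2 := by nlinarith
  rw [div_le_div_iff₀ (by nlinarith) (by nlinarith)]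
  linear_combination 3 * x * mul_nonneg hN hgap

end AgonyThreshold

theorem stmt_16_general (a : ℕ) (ha : 2 ≤ a) (p q : ℝ) (hqp : q ≤ p) (hp : 0 < p) :
    6 * ((2 : ℝ) ^ (1 - (a : ℤ)) * (q - p) + 2 * p - q) /
        (-3 * (2 : ℝ) ^ a + (2 : ℝ) ^ (3 * a + 1) + (4 : ℝ) ^ a + 4) ≤
      (6 * ((2 : ℝ) ^ a - 1) * p - 3 * ((2 : ℝ) ^ a - 2) * q) /
        ((2 : ℝ) ^ a - (4 : ℝ) ^ a + (8 : ℝ) ^ a) := by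
  have hx : (2 : ℝ) ≤ 2 ^ a := le_self_pow₀ one_le_two (by omega)
  have h4 : (4 : ℝ) ^ a = (2 ^ a) ^ 2 := by rw [← pow_mul', pow_mul]; norm_num
  have h8 : (8 : ℝ) ^ a = (2 ^ a) ^ 3 := by rw [← pow_mul', pow_mul]; norm_num
  have h3a : (2 : ℝ) ^ (3 * a + 1) = 2 * (2 ^ a) ^ 3 := by rw [pow_succ, pow_mul']; ring
  have hinv : (2 : ℝ) ^ (1 - (a : ℤ)) = 2 / 2 ^ a := by
    rw [zpow_sub₀ two_ne_zero, zpow_one, zpow_natCast]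
  rw [h4, h8, h3a, hinv]
  exact AgonyThreshold.quadratic_le_linear hx hp.le hqp

/-- The resolution threshold `s_{2,m}` of agony with quadratic penalty (`d = 2`) is at
most the resolution threshold `s_m` of agony with linear penalty (`d = 1`). -/
theorem stmt_16 (a : ℕ) (ha : 2 ≤ a) (p q : ℝ) (hqp : q ≤ p) (hq : 0 ≤ q) (hp : 0 < p) :
    6 * ((2 : ℝ) ^ (1 - (a : ℤ)) * (q - p) + 2 * p - q) /
        (-3 * (2 : ℝ) ^ a + (2 : ℝ) ^ (3 * a + 1) + (4 : ℝ) ^ a + 4) ≤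
      (6 * ((2 : ℝ) ^ a - 1) * p - 3 * ((2 : ℝ) ^ a - 2) * q) /
        ((2 : ℝ) ^ a - (4 : ℝ) ^ a + (8 : ℝ) ^ a) :=
  stmt_16_general a ha p q hqp hp
end
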